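/- arXiv:math/0605251 — 2 statements merged into one kernel-verified Lean document; each statement's English description precedes it below -/
import Mathlib

section
/- Let μ be a probability measure on [0,∞) which is not a Dirac measure, and define h(s) = ∫₀^∞ s/(s² + u²) dμ(u). Then for all s > 0 one has 0 < h(s) < 1/s and h'(s) < h(s)/s − 2·h(s)². -/
/-!
Write `f_s(u) = s / (s² + u²)`. Differentiating under the integral gives
`h'(s) = h(s)/s - 2 ∫ f_s² dμ`, and `f_s² ≤ f_s / s` gives `∫ f_s² dμ ≤ h(s)/s`.
Since `f_s` is injective on `[0, ∞)` and `μ` is not a Dirac mass, `f_s` is not `μ`-a.e.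
constant, so its variance is positive: `h(s)² < ∫ f_s² dμ`. All three inequalities follow from
this one.
-/

open MeasureTheory Set ProbabilityTheory Filter

lemma sq_integral_lt_integral_sq {Ω : Type*} [MeasurableSpace Ω] {μ : Measure Ω}
    [IsProbabilityMeasure μ] {X : Ω → ℝ} (hX : MemLp X 2 μ)
    (hX_ne_const : ∀ c : ℝ, ¬∀ᵐ ω ∂μ, X ω = c) :
    (∫ ω, X ω ∂μ) ^ 2 < ∫ ω, X ω ^ 2 ∂μ := by
  have hvar : 0 < Var[X; μ] := (variance_nonneg X μ).lt_of_ne fun h ↦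
    hX_ne_const _ (ae_eq_integral_of_variance_eq_zero hX h.symm)
  rw [variance_eq_sub hX] at hvar
  simpa [sub_pos] using hvar

lemma MeasureTheory.Measure.exists_eq_dirac_of_injOn_of_ae_eq {α β : Type*} [MeasurableSpace α]
    {μ : Measure α} [IsProbabilityMeasure μ] {S : Set α} (hS : ∀ᵐ x ∂μ, x ∈ S)
    {g : α → β} (hg : InjOn g S) {c : β} (hc : ∀ᵐ x ∂μ, g x = c) :
    ∃ a, μ = Measure.dirac a := by
  obtain ⟨a, haS, hac⟩ := (hS.and hc).exists
  refine ⟨a, ?_⟩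
  have hae : id =ᵐ[μ] fun _ ↦ a := by
    filter_upwards [hS, hc] with x hxS hxc
    exact hg hxS haS (hxc.trans hac.symm)
  simpa using (hasLaw_dirac_of_ae_eq hae).map_eq

lemma injOn_div_sq_add_sq {s : ℝ} (hs : s ≠ 0) :
    InjOn (fun u ↦ s / (s ^ 2 + u ^ 2)) (Ici 0) := by
  intro u hu v hv huv
  have : u ^ 2 = v ^ 2 := by
    simp only at huv
    field_simp at huv
    linarith
  exact (sq_eq_sq₀ hu hv).1 this

lemma sq_div_sq_add_sq_le (s u : ℝ) : (s / (s ^ 2 + u ^ 2)) ^ 2 ≤ 1 / (s ^ 2 + u ^ 2) := by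
  rcases (add_nonneg (sq_nonneg s) (sq_nonneg u)).eq_or_lt with hA | hA
  · simp [← hA]
  rw [div_pow, div_le_div_iff₀ (by positivity) hA]
  nlinarith [sq_nonneg u]

lemma abs_div_sq_add_sq_le (s u : ℝ) : |s / (s ^ 2 + u ^ 2)| ≤ |s|⁻¹ := by
  rcases eq_or_ne s 0 with rfl | hs
  · simp
  rw [abs_div, abs_of_pos (by positivity : 0 < s ^ 2 + u ^ 2), ← sq_abs s,
    div_le_iff₀ (by positivity)]
  have : 0 < |s| := abs_pos.2 hs
  field_simp
  nlinarith [sq_nonneg u]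

lemma memLp_div_sq_add_sq (μ : Measure ℝ) [IsFiniteMeasure μ] (s : ℝ) :
    MemLp (fun u ↦ s / (s ^ 2 + u ^ 2)) 2 μ :=
  .of_bound (by fun_prop : Measurable fun u : ℝ ↦ s / (s ^ 2 + u ^ 2)).aestronglyMeasurable _
    (.of_forall (abs_div_sq_add_sq_le s))

lemma hasDerivAt_div_sq_add_sq {t : ℝ} (u : ℝ) (ht : t ≠ 0) :
    HasDerivAt (fun t ↦ t / (t ^ 2 + u ^ 2))
      (1 / (t ^ 2 + u ^ 2) - 2 * (t / (t ^ 2 + u ^ 2)) ^ 2) t := by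
  have hA : t ^ 2 + u ^ 2 ≠ 0 := by positivity
  refine ((hasDerivAt_id' t).div ((hasDerivAt_pow 2 t).add_const (u ^ 2)) hA).congr_deriv ?_
  field_simp
  ring

lemma abs_deriv_div_sq_add_sq_le {t : ℝ} (u : ℝ) (ht : t ≠ 0) :
    |1 / (t ^ 2 + u ^ 2) - 2 * (t / (t ^ 2 + u ^ 2)) ^ 2| ≤ (t ^ 2)⁻¹ := by
  have hle : 1 / (t ^ 2 + u ^ 2) ≤ (t ^ 2)⁻¹ := by
    rw [one_div]
    exact inv_anti₀ (by positivity) (by nlinarith [sq_nonneg u])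
  have := sq_div_sq_add_sq_le t u
  rw [abs_le]
  constructor <;> nlinarith [sq_nonneg (t / (t ^ 2 + u ^ 2))]

lemma hasDerivAt_integral_div_sq_add_sq (μ : Measure ℝ) [IsFiniteMeasure μ] {s : ℝ}
    (hs : s ≠ 0) :
    HasDerivAt (fun t ↦ ∫ u, t / (t ^ 2 + u ^ 2) ∂μ)
      (∫ u, (1 / (s ^ 2 + u ^ 2) - 2 * (s / (s ^ 2 + u ^ 2)) ^ 2) ∂μ) s := by
  have hnhds : {t : ℝ | |s| / 2 < |t|} ∈ nhds s :=
    (isOpen_lt continuous_const continuous_abs).mem_nhds (by simpa using abs_pos.2 hs)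
  have hne : ∀ t ∈ {t : ℝ | |s| / 2 < |t|}, t ≠ 0 := fun t ht ↦
    abs_pos.1 <| (by positivity : 0 ≤ |s| / 2).trans_lt ht
  refine (hasDerivAt_integral_of_dominated_loc_of_deriv_le (μ := μ)
    (F := fun t u ↦ t / (t ^ 2 + u ^ 2))
    (F' := fun t u ↦ 1 / (t ^ 2 + u ^ 2) - 2 * (t / (t ^ 2 + u ^ 2)) ^ 2)
    (bound := fun _ ↦ ((s / 2) ^ 2)⁻¹) hnhds (.of_forall fun t ↦ ?_)
    ((memLp_div_sq_add_sq μ s).integrable one_le_two) ?_ (.of_forall fun u t ht ↦ ?_)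
    (integrable_const _) (.of_forall fun u t ht ↦ hasDerivAt_div_sq_add_sq u (hne t ht))).2
  · exact (by fun_prop : Measurable fun u : ℝ ↦ t / (t ^ 2 + u ^ 2)).aestronglyMeasurable
  · exact (by fun_prop : Measurable fun u : ℝ ↦
      1 / (s ^ 2 + u ^ 2) - 2 * (s / (s ^ 2 + u ^ 2)) ^ 2).aestronglyMeasurable
  · refine (abs_deriv_div_sq_add_sq_le u (hne t ht)).trans (inv_anti₀ (by positivity) ?_)
    exact sq_le_sq.2 (by simpa [abs_div] using ht.le)

theorem stmt3 (μ : Measure ℝ) [IsProbabilityMeasure μ] (hμ : μ (Iio 0) = 0)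
    (hnd : ∀ c : ℝ, μ ≠ Measure.dirac c)
    (h : ℝ → ℝ) (hdef : ∀ s : ℝ, h s = ∫ u, s / (s ^ 2 + u ^ 2) ∂μ)
    (s : ℝ) (hs : 0 < s) :
    0 < h s ∧ h s < 1 / s ∧
      ∃ d : ℝ, HasDerivAt h d s ∧ d < h s / s - 2 * h s ^ 2 := by
  set f : ℝ → ℝ := fun u ↦ s / (s ^ 2 + u ^ 2) with hf_def
  have hf : MemLp f 2 μ := memLp_div_sq_add_sq μ s
  have hf_ne_const : ∀ c : ℝ, ¬∀ᵐ u ∂μ, f u = c := fun c hc ↦ by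
    have hnonneg : ∀ᵐ u ∂μ, u ∈ Ici (0 : ℝ) :=
      (mem_ae_iff.2 (by rwa [compl_Ici]) : Ici 0 ∈ ae μ)
    obtain ⟨a, ha⟩ :=
      Measure.exists_eq_dirac_of_injOn_of_ae_eq hnonneg (injOn_div_sq_add_sq hs.ne') hc
    exact hnd a ha
  have hvar : h s ^ 2 < ∫ u, f u ^ 2 ∂μ := hdef s ▸ sq_integral_lt_integral_sq hf hf_ne_const
  have hf_div : ∀ u, 1 / (s ^ 2 + u ^ 2) = f u / s := fun u ↦ by
    simp only [hf_def]
    field_simp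
  have hsq_le : ∫ u, f u ^ 2 ∂μ ≤ h s / s := by
    rw [hdef, ← integral_div]
    exact integral_mono hf.integrable_sq ((hf.integrable one_le_two).div_const s)
      fun u ↦ hf_div u ▸ sq_div_sq_add_sq_le s u
  have hpos : 0 < h s := by
    have : 0 < h s / s := (sq_nonneg _).trans_lt (hvar.trans_le hsq_le)
    exact (div_pos_iff_of_pos_right hs).1 this
  have hderiv : HasDerivAt h (h s / s - 2 * ∫ u, f u ^ 2 ∂μ) s := by
    convert funext hdef ▸ hasDerivAt_integral_div_sq_add_sq μ hs.ne' using 1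
    simp_rw [hf_div]
    rw [integral_sub ((hf.integrable one_le_two).div_const s) (hf.integrable_sq.const_mul 2),
      integral_div, integral_const_mul, hdef]
  have hlt : h s * h s < h s * (1 / s) := by
    rw [← sq, mul_one_div]
    linarith
  exact ⟨hpos, lt_of_mul_lt_mul_left hlt hpos.le, _, hderiv, by linarith⟩
end

section
/- Let μ be the probability measure on (0,∞) with density (1/π)·1/(√t·(1+t)) with respect to Lebesgue measure. Then μ is indeed a probability measure, and its Stieltjes transform satisfies G_μ(λ) = ∫₀^∞ 1/(λ−t) dμ(t) = 1/(λ − √(−λ)) for all λ < 0, where √(−λ) denotes the positive square root of −λ. -/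
open MeasureTheory Set Real

/-!
Substituting `t = x ^ 2` turns the density into `(2 / π) (1 + x ^ 2)⁻¹`, whose integral is `1`,
and the Stieltjes transform at `λ = -a ^ 2` into `-(2 / π) ∫ (a ^ 2 + x ^ 2)⁻¹ (1 + x ^ 2)⁻¹`.
The last integral `I` is found without partial fractions (which break down at `a = 1`):
the inversion `x ↦ a / x` maps `I` to `a⁻¹ (π / 2 - a ^ 2 I)`, so `I = π / (2 a (a + 1))`.
-/

section Substitution

variable {E : Type*} [NormedAddCommGroup E] [NormedSpace ℝ E]

theorem integral_comp_sq_Ioi (g : ℝ → E) :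
    ∫ x in Ioi 0, (2 * x) • g (x ^ 2) = ∫ t in Ioi 0, g t := by
  rw [← integral_comp_rpow_Ioi_of_pos (g := g) two_pos]
  refine setIntegral_congr_fun measurableSet_Ioi fun x _ => ?_
  rw [show (2 : ℝ) - 1 = 1 by norm_num, rpow_one, rpow_two]

theorem integral_comp_const_div_Ioi (g : ℝ → E) {c : ℝ} (hc : 0 < c) :
    ∫ x in Ioi 0, (c / x ^ 2) • g (c / x) = ∫ t in Ioi 0, g t := by
  have himage : (c / ·) '' Ioi 0 = Ioi (0 : ℝ) := by
    refine (image_subset_iff.2 fun x hx => div_pos hc hx).antisymm fun t ht => ?_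
    exact ⟨c / t, div_pos hc ht, div_div_cancel₀ hc.ne'⟩
  have hderiv : ∀ x ∈ Ioi (0 : ℝ), HasDerivWithinAt (c / ·) (-(c / x ^ 2)) (Ioi 0) x := by
    intro x hx
    simpa [div_eq_mul_inv] using ((hasDerivAt_inv (ne_of_gt hx)).const_mul c).hasDerivWithinAt
  have hinj : InjOn (c / ·) (Ioi (0 : ℝ)) := fun x _ y _ h => by
    simpa [div_eq_mul_inv, hc.ne'] using h
  have h := integral_image_eq_integral_abs_deriv_smul measurableSet_Ioi hderiv hinj g
  rw [himage] at h
  rw [h]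
  refine setIntegral_congr_fun measurableSet_Ioi fun x (hx : 0 < x) => ?_
  rw [abs_neg, abs_of_pos (by positivity)]

end Substitution

theorem integrable_inv_sq_add_sq {a : ℝ} (ha : a ≠ 0) :
    Integrable fun x : ℝ => (a ^ 2 + x ^ 2)⁻¹ := by
  have h := (integrable_inv_one_add_sq.comp_div ha).const_mul (a ^ 2)⁻¹
  refine h.congr (Filter.Eventually.of_forall fun x => ?_)
  dsimp only
  field_simp

theorem integral_Ioi_inv_sq_add_sq {a : ℝ} (ha : 0 < a) :
    ∫ x in Ioi 0, (a ^ 2 + x ^ 2)⁻¹ = π / (2 * a) := by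
  have h := integral_comp_mul_left_Ioi (fun x : ℝ => (1 + x ^ 2)⁻¹) 0 (inv_pos.2 ha)
  rw [mul_zero, integral_Ioi_inv_one_add_sq, arctan_zero, sub_zero, inv_inv, smul_eq_mul] at h
  calc ∫ x in Ioi 0, (a ^ 2 + x ^ 2)⁻¹ = ∫ x in Ioi 0, (a ^ 2)⁻¹ * (1 + (a⁻¹ * x) ^ 2)⁻¹ := by
        refine setIntegral_congr_fun measurableSet_Ioi fun x _ => ?_
        field_simp
    _ = π / (2 * a) := by
        rw [integral_const_mul, h]
        field_simp

theorem integrable_inv_sq_add_sq_mul_inv_sq_add_sq {a b : ℝ} (ha : a ≠ 0) (hb : b ≠ 0) :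
    Integrable fun x : ℝ => (a ^ 2 + x ^ 2)⁻¹ * (b ^ 2 + x ^ 2)⁻¹ := by
  refine ((integrable_inv_sq_add_sq hb).const_mul (a ^ 2)⁻¹).mono' (by fun_prop)
    (Filter.Eventually.of_forall fun x => ?_)
  rw [norm_of_nonneg (by positivity)]
  gcongr
  exact le_add_of_nonneg_right (sq_nonneg x)

theorem integral_Ioi_inv_sq_add_sq_mul_inv_sq_add_sq {a b : ℝ} (ha : 0 < a) (hb : 0 < b) :
    ∫ x in Ioi 0, (a ^ 2 + x ^ 2)⁻¹ * (b ^ 2 + x ^ 2)⁻¹ = π / (2 * a * b * (a + b)) := by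
  set I := ∫ x in Ioi 0, (a ^ 2 + x ^ 2)⁻¹ * (b ^ 2 + x ^ 2)⁻¹
  -- after `x ↦ a b / x` the integrand is `(a b)⁻¹ x ^ 2 / ((a ^ 2 + x ^ 2) (b ^ 2 + x ^ 2))`
  have hI : I = (a * b)⁻¹ * (π / (2 * b) - a ^ 2 * I) := calc
    I = ∫ x in Ioi 0, (a * b / x ^ 2) •
          ((a ^ 2 + (a * b / x) ^ 2)⁻¹ * (b ^ 2 + (a * b / x) ^ 2)⁻¹) :=
        (integral_comp_const_div_Ioi (fun x => (a ^ 2 + x ^ 2)⁻¹ * (b ^ 2 + x ^ 2)⁻¹)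
          (by positivity)).symm
    _ = ∫ x in Ioi 0, (a * b)⁻¹ *
          ((b ^ 2 + x ^ 2)⁻¹ - a ^ 2 * ((a ^ 2 + x ^ 2)⁻¹ * (b ^ 2 + x ^ 2)⁻¹)) := by
        refine setIntegral_congr_fun measurableSet_Ioi fun x (hx : 0 < x) => ?_
        rw [smul_eq_mul]
        field_simp
        ring
    _ = (a * b)⁻¹ * (π / (2 * b) - a ^ 2 * I) := by
        rw [integral_const_mul, integral_sub (integrable_inv_sq_add_sq hb.ne').integrableOn
          ((integrable_inv_sq_add_sq_mul_inv_sq_add_sq ha.ne' hb.ne').integrableOn.const_mul _),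
          integral_const_mul, integral_Ioi_inv_sq_add_sq hb]
  field_simp at hI ⊢
  linear_combination hI

theorem stmt17 :
    (∫ t in Ioi (0 : ℝ), (1 / Real.pi) * (1 / (Real.sqrt t * (1 + t))) = 1) ∧
    ∀ lam : ℝ, lam < 0 →
      ∫ t in Ioi (0 : ℝ),
          (1 / (lam - t)) * ((1 / Real.pi) * (1 / (Real.sqrt t * (1 + t))))
        = 1 / (lam - Real.sqrt (-lam)) := by
  have hdensity : ∀ x ∈ Ioi (0 : ℝ),
      (2 * x) • ((1 / π) * (1 / (√(x ^ 2) * (1 + x ^ 2)))) = 2 / π * (1 + x ^ 2)⁻¹ := by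
    intro x (hx : 0 < x)
    rw [sqrt_sq hx.le, smul_eq_mul]
    field_simp
  refine ⟨?_, fun lam hlam => ?_⟩
  · rw [← integral_comp_sq_Ioi, setIntegral_congr_fun measurableSet_Ioi hdensity,
      integral_const_mul, integral_Ioi_inv_one_add_sq, arctan_zero, sub_zero]
    field_simp
  · obtain ⟨a, ha, rfl⟩ : ∃ a, 0 < a ∧ lam = -a ^ 2 :=
      ⟨√(-lam), sqrt_pos.2 (neg_pos.2 hlam), by rw [sq_sqrt (neg_pos.2 hlam).le, neg_neg]⟩
    have hpull : ∀ x ∈ Ioi (0 : ℝ), (2 * x) • ((1 / (-a ^ 2 - x ^ 2)) *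
        ((1 / π) * (1 / (√(x ^ 2) * (1 + x ^ 2))))) =
        -(2 / π) * ((a ^ 2 + x ^ 2)⁻¹ * (1 ^ 2 + x ^ 2)⁻¹) := fun x hx => by
      rw [← mul_smul_comm, hdensity x hx, show -a ^ 2 - x ^ 2 = -(a ^ 2 + x ^ 2) by ring, one_div,
        inv_neg, one_pow]
      ring
    rw [← integral_comp_sq_Ioi, setIntegral_congr_fun measurableSet_Ioi hpull, integral_const_mul,
      integral_Ioi_inv_sq_add_sq_mul_inv_sq_add_sq ha one_pos, neg_neg, sqrt_sq ha.le,
      show -a ^ 2 - a = -(a * (a + 1)) by ring]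
    field_simp
end
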